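/- arXiv:1507.06066 — 3 statements merged into one kernel-verified Lean document; each statement's English description precedes it below -/
import Mathlib

section
/- Suppose a : ℕ → ℂ satisfies ∑_{p ≤ u, p prime} |a(p)| = κ·u/log u + O(u/(log u)²) as u → ∞, for some κ > 0. Then for σ > 1 with σ - 1 = O(1/log x), ∑_{p ≤ x, p prime} |a(p)|/p^σ = κ·li(x^{1-σ}) - κ·li(2^{1-σ}) + O(1), where li denotes the logarithmic integral. -/
/-!
Partial summation against `S t = ∑_{p ≤ t} ‖a p‖` with weight `t ^ (-σ)` writes the prime sum
as `x ^ (-σ) S x + ∫₂ˣ σ t ^ (-σ - 1) S t dt`. The substitution `u = t ^ (1 - σ)` identifies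
`κ ∫₂ˣ t ^ (-σ) dt / log t` with `κ li (x ^ (1 - σ)) - κ li (2 ^ (1 - σ))`, and the difference
of the two integrands is `σ t ^ (-σ - 1) (S t - κ t / log t) + (σ - 1) κ t ^ (-σ) / log t`.
The first term is `O(1 / (t log² t))`, integrable on `[2, ∞)`; the second is `O((σ - 1) / t)`,
whose integral is `O((σ - 1) log x) = O(1)`.
-/

open Filter

/-- The logarithmic integral `li ξ = ∫₀^ξ dt / log t` (for `0 < ξ < 1` this is a
proper convergent integral, which is the only case in which we use it). -/
noncomputable def li (ξ : ℝ) : ℝ := ∫ t in Set.Ioo (0 : ℝ) ξ, 1 / Real.log t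

open Real MeasureTheory Finset

lemma integrableOn_one_div_log_Ioo {q : ℝ} (hq0 : 0 < q) (hq1 : q < 1) :
    IntegrableOn (fun t ↦ 1 / log t) (Set.Ioo 0 q) := by
  refine Measure.integrableOn_of_bounded (M := (-log q)⁻¹) (by simp [volume_Ioo])
    (measurable_log.inv.aestronglyMeasurable.congr (ae_of_all _ fun t ↦ (one_div _).symm))
    ((ae_restrict_iff' measurableSet_Ioo).mpr (ae_of_all _ fun t ht ↦ ?_))
  have hlt : log t < log q := log_lt_log ht.1 ht.2
  have hq : log q < 0 := log_neg hq0 hq1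
  rw [norm_eq_abs, one_div, abs_inv, abs_of_neg (hlt.trans hq)]
  exact inv_anti₀ (by linarith) (by linarith)

lemma li_sub_li {p q : ℝ} (hp : 0 < p) (hpq : p ≤ q) (hq : q < 1) :
    li q - li p = ∫ t in p..q, 1 / log t := by
  have hint := integrableOn_one_div_log_Ioo (hp.trans_le hpq) hq
  rw [li, li, ← Set.Ioo_union_Ico_eq_Ioo hp hpq,
    setIntegral_union ((Set.Iio_disjoint_Ici le_rfl).mono Set.Ioo_subset_Iio_self
      Set.Ico_subset_Ici_self) measurableSet_Ico
      (hint.mono_set (Set.Ioo_subset_Ioo_right hpq))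
      (hint.mono_set fun t ht ↦ ⟨hp.trans_le ht.1, ht.2⟩),
    setIntegral_congr_set Ico_ae_eq_Ioc, ← intervalIntegral.integral_of_le hpq]
  ring

lemma integral_rpow_neg_div_log {a x σ : ℝ} (ha : 1 < a) (hax : a ≤ x) (hσ : 1 < σ) :
    ∫ t in a..x, t ^ (-σ) / log t = li (x ^ (1 - σ)) - li (a ^ (1 - σ)) := by
  have hpos : ∀ t ∈ Set.uIcc a x, 0 < t := fun t ht ↦ by
    rw [Set.uIcc_of_le hax] at ht; linarith [ht.1]
  have hone : ∀ t ∈ Set.uIcc a x, 1 < t := fun t ht ↦ by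
    rw [Set.uIcc_of_le hax] at ht; linarith [ht.1]
  have hσ' : 1 - σ < 0 := by linarith
  calc ∫ t in a..x, t ^ (-σ) / log t
      = ∫ t in a..x, ((1 - σ) * t ^ (1 - σ - 1)) • ((fun u ↦ 1 / log u) ∘ (· ^ (1 - σ))) t :=
        intervalIntegral.integral_congr fun t ht ↦ by
          have := (hpos t ht).ne'
          have := (log_pos (hone t ht)).ne'
          have := hσ'.ne
          simp only [Function.comp, smul_eq_mul, log_rpow (hpos t ht), sub_sub_cancel_left]
          field_simp
    _ = ∫ u in a ^ (1 - σ)..x ^ (1 - σ), 1 / log u :=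
        intervalIntegral.integral_deriv_smul_comp'
          (fun t ht ↦ hasDerivAt_rpow_const (Or.inl (hpos t ht).ne'))
          (fun t ht ↦ (continuousAt_const.mul (continuousAt_rpow_const _ _
            (Or.inl (hpos t ht).ne'))).continuousWithinAt)
          (by
            rintro _ ⟨t, ht, rfl⟩
            have hu0 := rpow_pos_of_pos (hpos t ht) (1 - σ)
            have hu1 := rpow_lt_one_of_one_lt_of_neg (hone t ht) hσ'
            exact (continuousAt_const.div (continuousAt_log hu0.ne')
              (log_neg hu0 hu1).ne).continuousWithinAt)
    _ = li (x ^ (1 - σ)) - li (a ^ (1 - σ)) := by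
        rw [intervalIntegral.integral_symm, ← li_sub_li (rpow_pos_of_pos (by linarith) _)
          (rpow_le_rpow_of_nonpos (by linarith) hax hσ'.le)
          (rpow_lt_one_of_one_lt_of_neg ha hσ')]
        ring

lemma intervalIntegrable_one_div_mul_log_sq {a x : ℝ} (ha : 1 < a) (hax : a ≤ x) :
    IntervalIntegrable (fun t ↦ 1 / (t * log t ^ 2)) volume a x := by
  have hpos : ∀ t ∈ Set.uIcc a x, 0 < t ∧ 0 < log t := fun t ht ↦ by
    rw [Set.uIcc_of_le hax] at ht; exact ⟨by linarith [ht.1], log_pos (by linarith [ht.1])⟩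
  refine intervalIntegral.intervalIntegrable_one_div
    (fun t ht ↦ (mul_pos (hpos t ht).1 (pow_pos (hpos t ht).2 2)).ne') fun t ht ↦ ?_
  exact (continuousAt_id.mul ((continuousAt_log (hpos t ht).1.ne').pow 2)).continuousWithinAt

lemma integral_one_div_mul_log_sq {a x : ℝ} (ha : 1 < a) (hax : a ≤ x) :
    ∫ t in a..x, 1 / (t * log t ^ 2) = (log a)⁻¹ - (log x)⁻¹ := by
  have hderiv : ∀ t ∈ Set.uIcc a x,
      HasDerivAt (fun s ↦ -(log s)⁻¹) (1 / (t * log t ^ 2)) t := fun t ht ↦ by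
    rw [Set.uIcc_of_le hax] at ht
    have ht0 : 0 < t := by linarith [ht.1]
    have hlt : 0 < log t := log_pos (by linarith [ht.1])
    refine ((hasDerivAt_log ht0.ne').inv hlt.ne').neg.congr_deriv ?_
    field_simp
  rw [intervalIntegral.integral_eq_sub_of_hasDerivAt hderiv
    (intervalIntegrable_one_div_mul_log_sq ha hax)]
  ring

lemma rpow_neg_le_inv {t σ : ℝ} (ht : 1 ≤ t) (hσ : 1 ≤ σ) : t ^ (-σ) ≤ t⁻¹ := by
  rw [← rpow_neg_one]
  exact rpow_le_rpow_of_exponent_le ht (by linarith)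

section PartialSummation

variable (c : ℕ → ℝ)

lemma sum_rpow_neg_mul_eq (hc0 : c 0 = 0) (hc1 : c 1 = 0) (σ : ℝ) {x : ℝ} (hx : 2 ≤ x) :
    ∑ k ∈ Icc 0 ⌊x⌋₊, (k : ℝ) ^ (-σ) * c k =
      x ^ (-σ) * ∑ k ∈ Icc 0 ⌊x⌋₊, c k +
        ∫ t in (2 : ℝ)..x, σ * t ^ (-σ - 1) * ∑ k ∈ Icc 0 ⌊t⌋₊, c k := by
  have hpos : ∀ t ∈ Set.Icc (2 : ℝ) x, t ≠ 0 := fun t ht ↦ by linarith [ht.1]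
  have hint : IntegrableOn (deriv fun t : ℝ ↦ t ^ (-σ)) (Set.Icc 2 x) := by
    rw [Real.deriv_rpow_const']
    exact ContinuousOn.integrableOn_Icc fun t ht ↦
      (continuousAt_const.mul (continuousAt_rpow_const _ _ (Or.inl (hpos t ht)))).continuousWithinAt
  rw [sum_mul_eq_sub_integral_mul₁ c hc0 hc1 x
      (fun t ht ↦ (hasDerivAt_rpow_const (Or.inl (hpos t ht))).differentiableAt) hint,
    intervalIntegral.integral_of_le hx, sub_eq_add_neg, ← integral_neg]
  simp only [Real.deriv_rpow_const]
  ring_nf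

lemma integrableOn_rpow_mul_sum_Icc (σ : ℝ) {x : ℝ} :
    IntegrableOn (fun t ↦ σ * t ^ (-σ - 1) * ∑ k ∈ Icc 0 ⌊t⌋₊, c k) (Set.Icc 2 x) :=
  integrableOn_mul_sum_Icc c zero_le_two <| ContinuousOn.integrableOn_Icc fun t ht ↦
    (continuousAt_const.mul (continuousAt_rpow_const _ _
      (Or.inl (by linarith [ht.1])))).continuousWithinAt

lemma sum_rpow_neg_mul_sub_li_eq (hc0 : c 0 = 0) (hc1 : c 1 = 0) (κ : ℝ) {x σ : ℝ}
    (hx : 2 ≤ x) (hσ : 1 < σ) :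
    ∑ k ∈ Icc 0 ⌊x⌋₊, (k : ℝ) ^ (-σ) * c k - κ * (li (x ^ (1 - σ)) - li (2 ^ (1 - σ))) =
      x ^ (-σ) * ∑ k ∈ Icc 0 ⌊x⌋₊, c k +
        ∫ t in (2 : ℝ)..x, (σ * t ^ (-σ - 1) * (∑ k ∈ Icc 0 ⌊t⌋₊, c k - κ * t / log t) +
          (σ - 1) * κ * (t ^ (-σ) / log t)) := by
  have hmain : IntervalIntegrable (fun t ↦ κ * (t ^ (-σ) / log t)) volume 2 x := by
    refine ContinuousOn.intervalIntegrable fun t ht ↦ ?_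
    rw [Set.uIcc_of_le hx] at ht
    have ht0 : t ≠ 0 := by linarith [ht.1]
    have hlog : log t ≠ 0 := (log_pos (by linarith [ht.1])).ne'
    exact (continuousAt_const.mul ((continuousAt_rpow_const _ _ (Or.inl ht0)).div
      (continuousAt_log ht0) hlog)).continuousWithinAt
  have hsum : IntervalIntegrable (fun t ↦ σ * t ^ (-σ - 1) * ∑ k ∈ Icc 0 ⌊t⌋₊, c k)
      volume 2 x :=
    (intervalIntegrable_iff_integrableOn_Icc_of_le hx).mpr (integrableOn_rpow_mul_sum_Icc c σ)
  rw [sum_rpow_neg_mul_eq c hc0 hc1 σ hx, ← integral_rpow_neg_div_log one_lt_two hx hσ,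
    ← intervalIntegral.integral_const_mul, add_sub_assoc,
    ← intervalIntegral.integral_sub hsum hmain]
  congr 1
  refine intervalIntegral.integral_congr fun t ht ↦ ?_
  rw [Set.uIcc_of_le hx] at ht
  have ht0 : 0 < t := by linarith [ht.1]
  have hlog : log t ≠ 0 := (log_pos (by linarith [ht.1])).ne'
  have hrpow : t ^ (-σ - 1) * t = t ^ (-σ) := by
    rw [← rpow_add_one ht0.ne', sub_add_cancel]
  field_simp
  rw [← hrpow]
  ring

end PartialSummation

section Bounds

variable {κ C₀ σ : ℝ}

lemma abs_rpow_neg_mul_le {x s : ℝ} (hσ : 1 ≤ σ) (hx : 2 ≤ x) (hC₀ : 0 ≤ C₀)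
    (hs : |s - κ * x / log x| ≤ C₀ * x / log x ^ 2) :
    |x ^ (-σ) * s| ≤ |κ| / log 2 + C₀ / log 2 ^ 2 := by
  have hx0 : 0 < x := by linarith
  have hlog2 : 0 < log 2 := log_pos one_lt_two
  have hlogx : log 2 ≤ log x := log_le_log two_pos hx
  have hlogx0 : 0 < log x := hlog2.trans_le hlogx
  have hs' : |s| ≤ |κ| * x / log x + C₀ * x / log x ^ 2 := by
    have : |κ * x / log x| = |κ| * x / log x := by
      rw [abs_div, abs_mul, abs_of_pos hx0, abs_of_pos hlogx0]
    linarith [abs_sub_abs_le_abs_sub s (κ * x / log x)]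
  calc |x ^ (-σ) * s| = x ^ (-σ) * |s| := by rw [abs_mul, abs_of_pos (rpow_pos_of_pos hx0 _)]
    _ ≤ x⁻¹ * (|κ| * x / log x + C₀ * x / log x ^ 2) :=
        mul_le_mul (rpow_neg_le_inv (by linarith) hσ) hs' (abs_nonneg s) (by positivity)
    _ = |κ| / log x + C₀ / log x ^ 2 := by field_simp
    _ ≤ |κ| / log 2 + C₀ / log 2 ^ 2 := by gcongr

lemma abs_remainder_integrand_le {t s : ℝ} (hσ : 1 ≤ σ) (hσ2 : σ ≤ 2) (ht : 2 ≤ t)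
    (hC₀ : 0 ≤ C₀) (hs : |s - κ * t / log t| ≤ C₀ * t / log t ^ 2) :
    |σ * t ^ (-σ - 1) * (s - κ * t / log t) + (σ - 1) * κ * (t ^ (-σ) / log t)| ≤
      2 * C₀ * (1 / (t * log t ^ 2)) + (σ - 1) * |κ| / log 2 * (1 / t) := by
  have ht0 : 0 < t := by linarith
  have hlog2 : 0 < log 2 := log_pos one_lt_two
  have hlogt : log 2 ≤ log t := log_le_log two_pos ht
  have hlogt0 : 0 < log t := hlog2.trans_le hlogt
  have hrpow : t ^ (-σ - 1) * t = t ^ (-σ) := by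
    rw [← rpow_add_one ht0.ne', sub_add_cancel]
  have hinv := rpow_neg_le_inv (by linarith) hσ (t := t)
  have herror : |σ * t ^ (-σ - 1) * (s - κ * t / log t)| ≤ 2 * C₀ * (1 / (t * log t ^ 2)) :=
    calc |σ * t ^ (-σ - 1) * (s - κ * t / log t)|
        = σ * t ^ (-σ - 1) * |s - κ * t / log t| := by
          rw [abs_mul, abs_of_nonneg (by positivity : 0 ≤ σ * t ^ (-σ - 1))]
      _ ≤ σ * t ^ (-σ - 1) * (C₀ * t / log t ^ 2) := by gcongr
      _ = σ * t ^ (-σ) * (C₀ / log t ^ 2) := by rw [← hrpow]; ring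
      _ ≤ 2 * t⁻¹ * (C₀ / log t ^ 2) := by gcongr
      _ = 2 * C₀ * (1 / (t * log t ^ 2)) := by field_simp
  have hmain : |(σ - 1) * κ * (t ^ (-σ) / log t)| ≤ (σ - 1) * |κ| / log 2 * (1 / t) :=
    calc |(σ - 1) * κ * (t ^ (-σ) / log t)| = (σ - 1) * |κ| * (t ^ (-σ) / log t) := by
          rw [abs_mul, abs_mul, abs_of_nonneg (by linarith : 0 ≤ σ - 1),
            abs_of_nonneg (by positivity : 0 ≤ t ^ (-σ) / log t)]
      _ ≤ (σ - 1) * |κ| * (t⁻¹ / log 2) := by gcongr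
      _ = (σ - 1) * |κ| / log 2 * (1 / t) := by ring
  exact (abs_add_le _ _).trans (add_le_add herror hmain)

end Bounds

lemma abs_integral_remainder_le (c : ℕ → ℝ) {κ C₀ x σ : ℝ} (hC₀ : 0 ≤ C₀)
    (hS : ∀ u : ℝ, 2 ≤ u → |∑ k ∈ Icc 0 ⌊u⌋₊, c k - κ * u / log u| ≤ C₀ * u / log u ^ 2)
    (hx : 2 ≤ x) (hσ : 1 ≤ σ) (hσ2 : σ ≤ 2) :
    |∫ t in (2 : ℝ)..x, (σ * t ^ (-σ - 1) * (∑ k ∈ Icc 0 ⌊t⌋₊, c k - κ * t / log t) +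
        (σ - 1) * κ * (t ^ (-σ) / log t))| ≤
      2 * C₀ / log 2 + (σ - 1) * log x * |κ| / log 2 := by
  have hlog2 : 0 < log 2 := log_pos one_lt_two
  have hlogx : 0 < log x := hlog2.trans_le (log_le_log two_pos hx)
  have hint₁ : IntervalIntegrable (fun t ↦ 2 * C₀ * (1 / (t * log t ^ 2))) volume 2 x :=
    (intervalIntegrable_one_div_mul_log_sq one_lt_two hx).const_mul _
  have hint₂ : IntervalIntegrable (fun t ↦ (σ - 1) * |κ| / log 2 * (1 / t)) volume 2 x :=
    (intervalIntegral.intervalIntegrable_one_div (fun t ht ↦ by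
      rw [Set.uIcc_of_le hx] at ht; exact (by linarith [ht.1] : (0 : ℝ) < t).ne')
      continuousOn_id).const_mul _
  calc _ ≤ ∫ t in (2 : ℝ)..x, (2 * C₀ * (1 / (t * log t ^ 2)) + (σ - 1) * |κ| / log 2 * (1 / t)) :=
        (norm_eq_abs _).ge.trans <| intervalIntegral.norm_integral_le_of_norm_le hx
          (ae_of_all _ fun t ht ↦ abs_remainder_integrand_le hσ hσ2 ht.1.le hC₀ (hS t ht.1.le))
          (hint₁.add hint₂)
    _ = 2 * C₀ * ((log 2)⁻¹ - (log x)⁻¹) + (σ - 1) * |κ| / log 2 * log (x / 2) := by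
        rw [intervalIntegral.integral_add hint₁ hint₂, intervalIntegral.integral_const_mul,
          intervalIntegral.integral_const_mul, integral_one_div_mul_log_sq one_lt_two hx,
          integral_one_div fun h ↦ by rw [Set.uIcc_of_le hx] at h; linarith [h.1]]
    _ ≤ 2 * C₀ / log 2 + (σ - 1) * log x * |κ| / log 2 := by
        have : 0 ≤ 2 * C₀ * (log x)⁻¹ := by positivity
        have : (σ - 1) * |κ| / log 2 * log (x / 2) ≤ (σ - 1) * |κ| / log 2 * log x := by
          gcongr
          linarith
        rw [div_eq_mul_inv (2 * C₀)]
        linarith [show (σ - 1) * |κ| / log 2 * log x = (σ - 1) * log x * |κ| / log 2 by ring]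

theorem abs_sum_rpow_neg_mul_sub_li_le (c : ℕ → ℝ) (hc0 : c 0 = 0) (hc1 : c 1 = 0)
    {κ C₀ : ℝ}
    (hS : ∀ u : ℝ, 2 ≤ u → |∑ k ∈ Icc 0 ⌊u⌋₊, c k - κ * u / log u| ≤ C₀ * u / log u ^ 2)
    {x σ : ℝ} (hx : 2 ≤ x) (hσ : 1 < σ) (hσ2 : σ ≤ 2) :
    |∑ k ∈ Icc 0 ⌊x⌋₊, (k : ℝ) ^ (-σ) * c k - κ * (li (x ^ (1 - σ)) - li (2 ^ (1 - σ)))| ≤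
      |κ| / log 2 + C₀ / log 2 ^ 2 + 2 * C₀ / log 2 + (σ - 1) * log x * |κ| / log 2 := by
  have hC₀ : 0 ≤ C₀ := by
    have := (abs_nonneg _).trans (hS 2 le_rfl)
    rwa [mul_div_assoc, mul_nonneg_iff_of_pos_right (by positivity)] at this
  rw [sum_rpow_neg_mul_sub_li_eq c hc0 hc1 κ hx hσ]
  refine (abs_add_le _ _).trans ?_
  linarith [abs_rpow_neg_mul_le hσ.le hx hC₀ (hS x hx),
    abs_integral_remainder_le c hC₀ hS hx hσ.le hσ2]

lemma sum_filter_prime_eq_sum_Icc (g : ℕ → ℝ) (n : ℕ) :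
    ∑ p ∈ (range (n + 1)).filter Nat.Prime, g p = ∑ k ∈ Icc 0 n, if k.Prime then g k else 0 := by
  rw [sum_filter, Nat.range_succ_eq_Icc_zero]

theorem sum_primes_rpow_eq_li_general (a : ℕ → ℂ) (κ : ℝ)
    (C₀ : ℝ)
    (hpnt : ∀ u : ℝ, 2 ≤ u →
      |(∑ p ∈ (Finset.range (⌊u⌋₊ + 1)).filter Nat.Prime, ‖a p‖)
          - κ * u / Real.log u| ≤ C₀ * u / (Real.log u) ^ 2) :
    ∀ A : ℝ, 0 < A → ∃ C : ℝ, ∀ᶠ x : ℝ in atTop, ∀ σ : ℝ, 1 < σ →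
      σ - 1 ≤ A / Real.log x →
      |(∑ p ∈ (Finset.range (⌊x⌋₊ + 1)).filter Nat.Prime,
          ‖a p‖ / (p : ℝ) ^ σ)
        - κ * li (x ^ (1 - σ)) + κ * li (2 ^ (1 - σ))| ≤ C := by
  intro A _
  set c : ℕ → ℝ := fun k ↦ if k.Prime then ‖a k‖ else 0
  have hsum : ∀ x σ : ℝ, ∑ p ∈ (range (⌊x⌋₊ + 1)).filter Nat.Prime, ‖a p‖ / (p : ℝ) ^ σ =
      ∑ k ∈ Icc 0 ⌊x⌋₊, (k : ℝ) ^ (-σ) * c k := fun x σ ↦ by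
    rw [sum_filter_prime_eq_sum_Icc]
    refine sum_congr rfl fun k _ ↦ ?_
    split_ifs <;> simp [c, *, rpow_neg (Nat.cast_nonneg k), div_eq_inv_mul]
  have hS : ∀ u : ℝ, 2 ≤ u → |∑ k ∈ Icc 0 ⌊u⌋₊, c k - κ * u / log u| ≤ C₀ * u / log u ^ 2 :=
    fun u hu ↦ by simpa only [sum_filter_prime_eq_sum_Icc] using hpnt u hu
  refine ⟨|κ| / log 2 + C₀ / log 2 ^ 2 + 2 * C₀ / log 2 + A * |κ| / log 2, ?_⟩
  filter_upwards [eventually_ge_atTop 2, tendsto_log_atTop.eventually_ge_atTop A]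
    with x hx hlogA σ hσ hσA
  have hlogx : 0 < log x := log_pos (by linarith)
  have hσlog : (σ - 1) * log x ≤ A := (le_div_iff₀ hlogx).mp hσA
  have hσ2 : σ ≤ 2 := by linarith [(div_le_one hlogx).mpr hlogA]
  rw [hsum, sub_add, ← mul_sub]
  refine (abs_sum_rpow_neg_mul_sub_li_le c (by simp [c, Nat.not_prime_zero])
    (by simp [c, Nat.not_prime_one]) hS hx hσ hσ2).trans ?_
  gcongr

theorem sum_primes_rpow_eq_li (a : ℕ → ℂ) (κ : ℝ) (hκ : 0 < κ)
    (C₀ : ℝ)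
    (hpnt : ∀ u : ℝ, 2 ≤ u →
      |(∑ p ∈ (Finset.range (⌊u⌋₊ + 1)).filter Nat.Prime, ‖a p‖)
          - κ * u / Real.log u| ≤ C₀ * u / (Real.log u) ^ 2) :
    ∀ A : ℝ, 0 < A → ∃ C : ℝ, ∀ᶠ x : ℝ in atTop, ∀ σ : ℝ, 1 < σ →
      σ - 1 ≤ A / Real.log x →
      |(∑ p ∈ (Finset.range (⌊x⌋₊ + 1)).filter Nat.Prime,
          ‖a p‖ / (p : ℝ) ^ σ)
        - κ * li (x ^ (1 - σ)) + κ * li (2 ^ (1 - σ))| ≤ C :=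
  sum_primes_rpow_eq_li_general a κ C₀ hpnt
end

section
/- For any function f : ℕ → ℝ≥0 supported on squarefree numbers, any multiplicative a : ℕ → ℂ, any N ≥ 1, any σ > 0 and any α > 0 (Rankin's trick): ∑_{k ≤ N} f(k)|a(k)|²/k^σ · ∑_{m > N/k, gcd(m,k)=1} f(m)²|a(m)|² ≤ N^{-α} · ∑_{k} f(k)|a(k)|²·k^{α-σ} · ∏_{p ∤ k}(1 + p^α·f(p)²|a(p)|²), provided all the sums and products converge; in particular it is ≤ N^{-α}·∏_p (1 + (f(p)² + f(p)/p^σ)·p^α·|a(p)|²) when f and a are multiplicative with f supported on squarefree numbers and a(1)=1. -/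
/-!
Rankin's trick: for `m > x` one has `1 ≤ (m / x) ^ α`, so the tail `∑_{m > x, (m,k)=1} h(m)` is at
most `x^(-α) ∑_{(m,k)=1} m^α h(m)`. For a nonnegative multiplicative weight `g` supported on
squarefree numbers, every finite partial sum of `∑_{(m,k)=1} g(m)` is dominated by the Euler product
`∏_{p ∤ k} (1 + g(p))`, since expanding `∏_{p ∈ T} (1 + g(p))` over subsets of `T` produces
`g(m)` for each squarefree `m` with prime factors in `T`. With `x = N/k` this bounds the inner sums.
Likewise, expanding `∏_p (A(p) + b(p))` over squarefree `k` gives `∑_k b(k) ∏_{p ∤ k} A(p)`; with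
`A(p) = 1 + p^α f(p)² |a(p)|²` and `b(p) = f(p) |a(p)|² p^(α-σ)` this bounds the partial sums of
the outer series by `∏_p (1 + (f(p)² + f(p)/p^σ) p^α |a(p)|²)`, which gives both its convergence and
the second inequality.
-/

open Finset Filter Topology

/-- Unlike `ArithmeticFunction.IsMultiplicative`, this imposes no condition at `0`. -/
def IsMultiplicativeFn {M : Type*} [MulOneClass M] (f : ℕ → M) : Prop :=
  f 1 = 1 ∧ ∀ m n : ℕ, m.Coprime n → f (m * n) = f m * f n

namespace IsMultiplicativeFn

variable {M : Type*} [CommMonoid M] {f g : ℕ → M}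

theorem mul (hf : IsMultiplicativeFn f) (hg : IsMultiplicativeFn g) :
    IsMultiplicativeFn (f * g) :=
  ⟨by simp [hf.1, hg.1], fun m n hmn => by
    simp only [Pi.mul_apply, hf.2 m n hmn, hg.2 m n hmn, mul_mul_mul_comm]⟩

theorem pow (hf : IsMultiplicativeFn f) (k : ℕ) : IsMultiplicativeFn (f ^ k) :=
  ⟨by simp [hf.1], fun m n hmn => by simp only [Pi.pow_apply, hf.2 m n hmn, mul_pow]⟩

theorem norm {E : Type*} [NormedDivisionRing E] {f : ℕ → E} (hf : IsMultiplicativeFn f) :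
    IsMultiplicativeFn fun n => ‖f n‖ :=
  ⟨by simp [hf.1], fun m n hmn => by simp only [hf.2 m n hmn, norm_mul]⟩

theorem eq_prod_primeFactors (hf : IsMultiplicativeFn f) {n : ℕ} (hn : Squarefree n) :
    f n = ∏ p ∈ n.primeFactors, f p := by
  rw [Nat.multiplicative_factorization f hf.2 hf.1 hn.ne_zero, Finsupp.prod,
    Nat.support_factorization]
  refine prod_congr rfl fun p hp => ?_
  rw [Nat.factorization_eq_one_of_squarefree hn (Nat.prime_of_mem_primeFactors hp)
    (Nat.dvd_of_mem_primeFactors hp), pow_one]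

end IsMultiplicativeFn

theorem isMultiplicativeFn_natCast_rpow (s : ℝ) : IsMultiplicativeFn fun n : ℕ => (n : ℝ) ^ s :=
  ⟨by simp, fun m n _ => by push_cast; exact Real.mul_rpow m.cast_nonneg n.cast_nonneg⟩

theorem HasProd.tendsto_prod_filter {ι α : Type*} [CommMonoid α] [TopologicalSpace α]
    {s : Set ι} [DecidablePred (· ∈ s)] {f : ι → α} {a : α} (h : HasProd (fun i : s => f i) a) :
    Tendsto (fun T : Finset ι => ∏ i ∈ T with i ∈ s, f i) atTop (𝓝 a) := by
  have := hasProd_subtype_iff_mulIndicator.mp h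
  simpa only [HasProd, SummationFilter.unconditional_filter, Set.mulIndicator_apply,
    ← prod_filter] using this

section OneLeProducts

variable {ι : Type*} {f g : ι → ℝ}

theorem prod_le_tprod_of_one_le (hf : ∀ i, 1 ≤ f i) (hm : Multipliable f) (T : Finset ι) :
    ∏ i ∈ T, f i ≤ ∏' i, f i :=
  (prod_mono_set_of_one_le hf).ge_of_tendsto hm.hasProd T

theorem prod_filter_le_tprod_subtype {s : Set ι} [DecidablePred (· ∈ s)] (hf : ∀ i, 1 ≤ f i)
    (hm : Multipliable fun i : s => f i) (T : Finset ι) :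
    ∏ i ∈ T with i ∈ s, f i ≤ ∏' i : s, f i :=
  ((prod_mono_set_of_one_le hf).comp (monotone_filter_left _)).ge_of_tendsto
    hm.hasProd.tendsto_prod_filter T

theorem multipliable_of_one_le_of_prod_le (hf : ∀ i, 1 ≤ f i) {c : ℝ}
    (h : ∀ T : Finset ι, ∏ i ∈ T, f i ≤ c) : Multipliable f :=
  ⟨_, tendsto_atTop_ciSup (prod_mono_set_of_one_le hf) ⟨c, Set.forall_mem_range.2 h⟩⟩

theorem Multipliable.of_one_le_of_le (hf : ∀ i, 1 ≤ f i) (hfg : ∀ i, f i ≤ g i)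
    (hg : Multipliable g) : Multipliable f :=
  multipliable_of_one_le_of_prod_le hf fun T =>
    (prod_le_prod (fun i _ => zero_le_one.trans (hf i)) fun i _ => hfg i).trans
      (prod_le_tprod_of_one_le (fun i => (hf i).trans (hfg i)) hg T)

theorem Multipliable.subtype_of_one_le_of_le {s t : Set ι} (hst : s ⊆ t) (hf : ∀ i, 1 ≤ f i)
    (hfg : ∀ i, f i ≤ g i) (hg : Multipliable fun i : t => g i) :
    Multipliable fun i : s => f i := by
  classical
  refine multipliable_subtype_iff_mulIndicator.mpr <|
    (multipliable_subtype_iff_mulIndicator.mp hg).of_one_le_of_le (fun i => ?_) fun i => ?_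
  · by_cases hi : i ∈ s <;> simp [hi, hf i]
  · by_cases hi : i ∈ s
    · simp [hi, hst hi, hfg i]
    · by_cases hit : i ∈ t <;> simp [hi, hit, (hf i).trans (hfg i)]

end OneLeProducts

theorem filter_not_dvd_eq_sdiff_primeFactors {T : Finset ℕ} (hT : ∀ p ∈ T, p.Prime) {k : ℕ}
    (hk : k ≠ 0) : {p ∈ T | ¬ p ∣ k} = T \ k.primeFactors := by
  ext p
  by_cases hp : p ∈ T <;> simp [hp, Nat.mem_primeFactors, hT p, hk]

theorem sum_prod_mul_prod_sdiff_le_prod_add {ι R : Type*} [DecidableEq ι] [CommSemiring R]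
    [PartialOrder R] [IsOrderedRing R] {T : Finset ι} {𝒮 : Finset (Finset ι)}
    (h𝒮 : 𝒮 ⊆ T.powerset) {A b : ι → R} (hA : ∀ i, 0 ≤ A i) (hb : ∀ i, 0 ≤ b i) :
    ∑ S ∈ 𝒮, (∏ i ∈ S, b i) * ∏ i ∈ T \ S, A i ≤ ∏ i ∈ T, (A i + b i) := by
  simp only [add_comm (A _), prod_add]
  exact sum_le_sum_of_subset_of_nonneg h𝒮 fun S _ _ =>
    mul_nonneg (prod_nonneg fun i _ => hb i) (prod_nonneg fun i _ => hA i)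

section EulerProductBound

variable {A b : ℕ → ℝ}

theorem sum_mul_prod_not_dvd_le_prod_add (hA : ∀ p, 0 ≤ A p) (hb : IsMultiplicativeFn b)
    (hb0 : ∀ n, 0 ≤ b n) (hb_sq : ∀ n, ¬Squarefree n → b n = 0) {T : Finset ℕ}
    (hT : ∀ p ∈ T, p.Prime) {K : Finset ℕ} (hK : ∀ k ∈ K, k.primeFactors ⊆ T) :
    ∑ k ∈ K, b k * ∏ p ∈ T with ¬ p ∣ k, A p ≤ ∏ p ∈ T, (A p + b p) := by
  have hinj : Set.InjOn Nat.primeFactors ↑{k ∈ K | Squarefree k} := fun k hk l hl hkl => by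
    rw [coe_filter] at hk hl
    rw [← Nat.prod_primeFactors_of_squarefree hk.2, ← Nat.prod_primeFactors_of_squarefree hl.2,
      hkl]
  calc ∑ k ∈ K, b k * ∏ p ∈ T with ¬ p ∣ k, A p
      = ∑ k ∈ K with Squarefree k, b k * ∏ p ∈ T with ¬ p ∣ k, A p :=
        (sum_filter_of_ne fun k _ hk => by_contra fun h => hk (by rw [hb_sq k h, zero_mul])).symm
    _ = ∑ k ∈ K with Squarefree k, (∏ p ∈ k.primeFactors, b p) * ∏ p ∈ T \ k.primeFactors, A p :=
        sum_congr rfl fun k hk => by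
          have hk := (mem_filter.1 hk).2
          rw [← hb.eq_prod_primeFactors hk, filter_not_dvd_eq_sdiff_primeFactors hT hk.ne_zero]
    _ = ∑ S ∈ image Nat.primeFactors {k ∈ K | Squarefree k}, (∏ p ∈ S, b p) * ∏ p ∈ T \ S, A p :=
        (sum_image (f := fun S => (∏ p ∈ S, b p) * ∏ p ∈ T \ S, A p) hinj).symm
    _ ≤ ∏ p ∈ T, (A p + b p) := by
      refine sum_prod_mul_prod_sdiff_le_prod_add (fun S hS => ?_) hA hb0
      obtain ⟨k, hk, rfl⟩ := mem_image.1 hS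
      exact mem_powerset.2 (hK k (mem_filter.1 hk).1)

theorem sum_mul_tprod_le_tprod {Q : Set ℕ} (hQ : ∀ p ∈ Q, p.Prime) (hA : ∀ p, 1 ≤ A p)
    (hb : IsMultiplicativeFn b) (hb0 : ∀ n, 0 ≤ b n) (hb_sq : ∀ n, ¬Squarefree n → b n = 0)
    (hm : Multipliable fun p : Q => A p + b p) (K : Finset ℕ)
    (hK : ∀ k ∈ K, ∀ p ∈ k.primeFactors, p ∈ Q) :
    ∑ k ∈ K, b k * ∏' p : {p ∈ Q | ¬ p ∣ k}, A p ≤ ∏' p : Q, (A p + b p) := by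
  classical
  -- Each infinite product is the limit of its partial products over `T`; once `T` contains the
  -- prime factors of `K`, the finite bound applies.
  have hAb : ∀ p, A p ≤ A p + b p := fun p => le_add_of_nonneg_right (hb0 p)
  have hmk : ∀ k, Multipliable fun p : {p ∈ Q | ¬ p ∣ k} => A p := fun k =>
    Multipliable.subtype_of_one_le_of_le (Set.sep_subset _ _) hA hAb hm
  have hlim : Tendsto (fun T : Finset ℕ => ∑ k ∈ K, b k * ∏ p ∈ T with p ∈ {p ∈ Q | ¬ p ∣ k}, A p)
      atTop (𝓝 (∑ k ∈ K, b k * ∏' p : {p ∈ Q | ¬ p ∣ k}, A p)) :=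
    tendsto_finsetSum _ fun k _ => (hmk k).hasProd.tendsto_prod_filter.const_mul (b k)
  refine le_of_tendsto hlim (eventually_atTop.2 ⟨K.biUnion Nat.primeFactors, fun T hT => ?_⟩)
  have hfilter : ∀ k, {p ∈ T | p ∈ {p ∈ Q | ¬ p ∣ k}} = {p ∈ {p ∈ T | p ∈ Q} | ¬ p ∣ k} :=
    fun k => by rw [filter_filter]; rfl
  simp only [hfilter]
  refine (sum_mul_prod_not_dvd_le_prod_add (fun p => zero_le_one.trans (hA p)) hb hb0 hb_sq
    (fun p hp => hQ p (mem_filter.1 hp).2) fun k hk p hp => ?_).trans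
    (prod_filter_le_tprod_subtype (fun p => (hA p).trans (hAb p)) hm T)
  exact mem_filter.2 ⟨hT (subset_biUnion_of_mem _ hk hp), hK k hk p hp⟩

end EulerProductBound

theorem tsum_tail_le_rpow_mul_tprod {h : ℕ → ℝ} (hh : IsMultiplicativeFn h) (h0 : ∀ n, 0 ≤ h n)
    (h_sq : ∀ n, ¬Squarefree n → h n = 0) {α : ℝ} (hα : 0 ≤ α) {x : ℝ} (hx : 0 < x) (k : ℕ)
    (hm : Multipliable fun p : {p : ℕ // p.Prime ∧ ¬ p ∣ k} => 1 + (p : ℝ) ^ α * h p) :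
    ∑' m : {m : ℕ // x < m ∧ m.Coprime k}, h m ≤
      x ^ (-α) * ∏' p : {p : ℕ // p.Prime ∧ ¬ p ∣ k}, (1 + (p : ℝ) ^ α * h p) := by
  refine Real.tsum_le_of_sum_le (fun m => h0 m) fun F => ?_
  have hEuler := sum_mul_tprod_le_tprod (Q := {p | p.Prime ∧ ¬ p ∣ k}) (A := 1)
    (fun p hp => hp.1) (fun _ => le_rfl) ((isMultiplicativeFn_natCast_rpow α).mul hh)
    (fun n => mul_nonneg (by positivity) (h0 n)) (fun n hn => by simp [h_sq n hn]) hm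
    (F.map (Function.Embedding.subtype _)) fun n hn p hp => by
      obtain ⟨m, -, rfl⟩ := mem_map.1 hn
      have hp' := Nat.prime_of_mem_primeFactors hp
      exact ⟨hp', (hp'.coprime_iff_not_dvd).1
        (m.2.2.coprime_dvd_left (Nat.dvd_of_mem_primeFactors hp))⟩
  simp only [Pi.one_apply, tprod_one, mul_one, sum_map, Function.Embedding.subtype_apply,
    Pi.mul_apply] at hEuler
  calc ∑ m ∈ F, h m
      ≤ ∑ m ∈ F, x ^ (-α) * ((m : ℝ) ^ α * h m) := sum_le_sum fun m _ => by
        calc h m = 1 * h m := (one_mul _).symm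
          _ ≤ ((m : ℝ) / x) ^ α * h m := by
            gcongr
            · exact h0 m
            · exact Real.one_le_rpow ((one_le_div hx).2 m.2.1.le) hα
          _ = x ^ (-α) * ((m : ℝ) ^ α * h m) := by
            rw [Real.div_rpow (Nat.cast_nonneg _) hx.le, Real.rpow_neg hx.le]
            ring
    _ = x ^ (-α) * ∑ m ∈ F, (m : ℝ) ^ α * h m := (mul_sum _ _ _).symm
    _ ≤ x ^ (-α) * ∏' p : {p : ℕ // p.Prime ∧ ¬ p ∣ k}, (1 + (p : ℝ) ^ α * h p) := by
      gcongr
      exact hEuler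

section RankinWeights

variable {f w : ℕ → ℝ} {σ α : ℝ}

theorem one_add_rpow_mul_le {n : ℕ} (hf : 0 ≤ f n) (hw : 0 ≤ w n) :
    1 + (n : ℝ) ^ α * (f n ^ 2 * w n) ≤ 1 + (f n ^ 2 + f n / (n : ℝ) ^ σ) * (n : ℝ) ^ α * w n :=
  (le_add_of_nonneg_right (by positivity : 0 ≤ f n / (n : ℝ) ^ σ * (n : ℝ) ^ α * w n)).trans_eq
    (by ring)

theorem mul_tsum_tail_le (hf : IsMultiplicativeFn f) (hf0 : ∀ n, 0 ≤ f n)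
    (hf_sq : ∀ n, ¬Squarefree n → f n = 0) (hw : IsMultiplicativeFn w) (hw0 : ∀ n, 0 ≤ w n)
    (hα : 0 ≤ α)
    (hG : Multipliable fun p : {p : ℕ // p.Prime} =>
      1 + (f p ^ 2 + f p / (p : ℝ) ^ σ) * (p : ℝ) ^ α * w p)
    {N k : ℕ} (hk : k ∈ Icc 1 N) :
    f k * w k / (k : ℝ) ^ σ * ∑' m : {m : ℕ // (N : ℝ) / k < m ∧ m.Coprime k}, f m ^ 2 * w m ≤
      (N : ℝ) ^ (-α) * (f k * w k * (k : ℝ) ^ (α - σ) *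
        ∏' p : {p : ℕ // p.Prime ∧ ¬ p ∣ k}, (1 + (p : ℝ) ^ α * f p ^ 2 * w p)) := by
  obtain ⟨hk1, hkN⟩ := mem_Icc.1 hk
  have hk0 : (0 : ℝ) < k := by exact_mod_cast hk1
  have hN0 : (0 : ℝ) < N := by exact_mod_cast hk1.trans hkN
  have hm : Multipliable fun p : {p : ℕ // p.Prime ∧ ¬ p ∣ k} =>
      1 + (p : ℝ) ^ α * (f p ^ 2 * w p) :=
    Multipliable.subtype_of_one_le_of_le (t := {p | p.Prime})
      (f := fun n : ℕ => 1 + (n : ℝ) ^ α * (f n ^ 2 * w n))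
      (g := fun n : ℕ => 1 + (f n ^ 2 + f n / (n : ℝ) ^ σ) * (n : ℝ) ^ α * w n)
      (fun p hp => hp.1) (fun n => le_add_of_nonneg_right (by have := hw0 n; positivity))
      (fun n => one_add_rpow_mul_le (hf0 n) (hw0 n)) hG
  have hRankin := tsum_tail_le_rpow_mul_tprod (h := fun n => f n ^ 2 * w n) ((hf.pow 2).mul hw)
    (fun n => by have := hw0 n; positivity) (fun n hn => by simp [hf_sq n hn]) hα
    (by positivity : (0 : ℝ) < N / k) k hm
  simp only [← mul_assoc] at hRankin
  calc f k * w k / (k : ℝ) ^ σ * ∑' m : {m : ℕ // (N : ℝ) / k < m ∧ m.Coprime k}, f m ^ 2 * w m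
      ≤ f k * w k / (k : ℝ) ^ σ * (((N : ℝ) / k) ^ (-α) *
          ∏' p : {p : ℕ // p.Prime ∧ ¬ p ∣ k}, (1 + (p : ℝ) ^ α * f p ^ 2 * w p)) := by
        have := hf0 k
        have := hw0 k
        gcongr
    _ = _ := by
        rw [Real.div_rpow hN0.le hk0.le, Real.rpow_sub hk0, Real.rpow_neg hk0.le]
        field_simp

theorem summable_and_tsum_le_tprod (hf : IsMultiplicativeFn f) (hf0 : ∀ n, 0 ≤ f n)
    (hf_sq : ∀ n, ¬Squarefree n → f n = 0) (hw : IsMultiplicativeFn w) (hw0 : ∀ n, 0 ≤ w n)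
    (hG : Multipliable fun p : {p : ℕ // p.Prime} =>
      1 + (f p ^ 2 + f p / (p : ℝ) ^ σ) * (p : ℝ) ^ α * w p) :
    let F := fun k : ℕ => f k * w k * (k : ℝ) ^ (α - σ) *
      ∏' p : {p : ℕ // p.Prime ∧ ¬ p ∣ k}, (1 + (p : ℝ) ^ α * f p ^ 2 * w p)
    Summable F ∧ ∑' k, F k ≤
      ∏' p : {p : ℕ // p.Prime}, (1 + (f p ^ 2 + f p / (p : ℝ) ^ σ) * (p : ℝ) ^ α * w p) := by
  intro F
  have hAb : ∀ p : {p : ℕ // p.Prime},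
      1 + (f p ^ 2 + f p / (p : ℝ) ^ σ) * (p : ℝ) ^ α * w p =
        (1 + (p : ℝ) ^ α * f p ^ 2 * w p) + f p * w p * (p : ℝ) ^ (α - σ) := fun p => by
    have hp : (0 : ℝ) < (p : ℕ) := Nat.cast_pos.2 p.2.pos
    rw [Real.rpow_sub hp]
    field_simp
    ring
  have hF0 : 0 ≤ F := fun k => mul_nonneg
    (mul_nonneg (mul_nonneg (hf0 k) (hw0 k)) (by positivity))
    (tprod_nonneg fun p => by have := hw0 p; positivity)
  have hbound : ∀ K : Finset ℕ, ∑ k ∈ K, F k ≤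
      ∏' p : {p : ℕ // p.Prime}, (1 + (f p ^ 2 + f p / (p : ℝ) ^ σ) * (p : ℝ) ^ α * w p) :=
    fun K => by
      rw [tprod_congr hAb]
      exact sum_mul_tprod_le_tprod (Q := {p | p.Prime})
        (A := fun n => 1 + (n : ℝ) ^ α * f n ^ 2 * w n) (fun p hp => hp)
        (fun p => le_add_of_nonneg_right (by have := hw0 p; positivity))
        ((hf.mul hw).mul (isMultiplicativeFn_natCast_rpow _))
        (fun n => mul_nonneg (mul_nonneg (hf0 n) (hw0 n)) (by positivity))
        (fun n hn => by simp [hf_sq n hn]) (hG.congr hAb) K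
        fun k _ p hp => Nat.prime_of_mem_primeFactors hp
  exact ⟨summable_of_sum_le hF0 hbound, Real.tsum_le_of_sum_le hF0 hbound⟩

end RankinWeights

theorem rankin_trick_general (f : ℕ → ℝ) (a : ℕ → ℂ) (N : ℕ) (σ α : ℝ)
    (hα : 0 < α)
    (hf_nonneg : ∀ n, 0 ≤ f n)
    (hf_sqfree : ∀ n : ℕ, ¬Squarefree n → f n = 0)
    (hf_mult : f 1 = 1 ∧ ∀ m n : ℕ, Nat.Coprime m n → f (m * n) = f m * f n)
    (ha_mult : a 1 = 1 ∧ ∀ m n : ℕ, Nat.Coprime m n → a (m * n) = a m * a n)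
    (hprod2 : Multipliable (fun p : {p : ℕ // p.Prime} =>
      1 + ((f p) ^ 2 + f p / ((p : ℕ) : ℝ) ^ σ) * ((p : ℕ) : ℝ) ^ α *
        (‖a p‖) ^ 2)) :
    (∑ k ∈ Finset.Icc 1 N, f k * (‖a k‖) ^ 2 / (k : ℝ) ^ σ *
        ∑' m : {m : ℕ // (N : ℝ) / k < (m : ℝ) ∧ Nat.Coprime m k},
          (f m) ^ 2 * (‖a m‖) ^ 2)
      ≤ (N : ℝ) ^ (-α) * ∑' k : ℕ, f k * (‖a k‖) ^ 2 * (k : ℝ) ^ (α - σ) *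
          ∏' p : {p : ℕ // p.Prime ∧ ¬ p ∣ k},
            (1 + ((p : ℕ) : ℝ) ^ α * (f p) ^ 2 * (‖a p‖) ^ 2) ∧
    (N : ℝ) ^ (-α) * (∑' k : ℕ, f k * (‖a k‖) ^ 2 * (k : ℝ) ^ (α - σ) *
          ∏' p : {p : ℕ // p.Prime ∧ ¬ p ∣ k},
            (1 + ((p : ℕ) : ℝ) ^ α * (f p) ^ 2 * (‖a p‖) ^ 2))
      ≤ (N : ℝ) ^ (-α) * ∏' p : {p : ℕ // p.Prime},
          (1 + ((f p) ^ 2 + f p / ((p : ℕ) : ℝ) ^ σ) * ((p : ℕ) : ℝ) ^ α *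
            (‖a p‖) ^ 2) := by
  have hf : IsMultiplicativeFn f := hf_mult
  have hw : IsMultiplicativeFn fun n => ‖a n‖ ^ 2 := (IsMultiplicativeFn.norm ha_mult).pow 2
  have hw0 : ∀ n, 0 ≤ ‖a n‖ ^ 2 := fun n => sq_nonneg _
  obtain ⟨hsummable, htsum⟩ := summable_and_tsum_le_tprod hf hf_nonneg hf_sqfree hw hw0 hprod2
  refine ⟨(sum_le_sum fun k hk =>
    mul_tsum_tail_le hf hf_nonneg hf_sqfree hw hw0 hα.le hprod2 hk).trans ?_, by gcongr⟩
  rw [← mul_sum]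
  gcongr
  exact hsummable.sum_le_tsum _ fun k _ => mul_nonneg
    (mul_nonneg (mul_nonneg (hf_nonneg k) (hw0 k)) (by positivity))
    (tprod_nonneg fun p => by positivity)

theorem rankin_trick (f : ℕ → ℝ) (a : ℕ → ℂ) (N : ℕ) (σ α : ℝ)
    (hN : 1 ≤ N) (hσ : 0 < σ) (hα : 0 < α)
    (hf_nonneg : ∀ n, 0 ≤ f n)
    (hf_sqfree : ∀ n : ℕ, ¬Squarefree n → f n = 0)
    (hf_mult : f 1 = 1 ∧ ∀ m n : ℕ, Nat.Coprime m n → f (m * n) = f m * f n)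
    (ha_mult : a 1 = 1 ∧ ∀ m n : ℕ, Nat.Coprime m n → a (m * n) = a m * a n)
    (hsum : ∀ k : ℕ, Summable (fun m : {m : ℕ // (N : ℝ) / k < (m : ℝ) ∧ Nat.Coprime m k} =>
      (f m) ^ 2 * (‖a m‖) ^ 2))
    (hprod : ∀ k : ℕ, Multipliable (fun p : {p : ℕ // p.Prime ∧ ¬ p ∣ k} =>
      1 + ((p : ℕ) : ℝ) ^ α * (f p) ^ 2 * (‖a p‖) ^ 2))
    (hsum2 : Summable (fun k : ℕ => f k * (‖a k‖) ^ 2 * (k : ℝ) ^ (α - σ) *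
      ∏' p : {p : ℕ // p.Prime ∧ ¬ p ∣ k},
        (1 + ((p : ℕ) : ℝ) ^ α * (f p) ^ 2 * (‖a p‖) ^ 2)))
    (hprod2 : Multipliable (fun p : {p : ℕ // p.Prime} =>
      1 + ((f p) ^ 2 + f p / ((p : ℕ) : ℝ) ^ σ) * ((p : ℕ) : ℝ) ^ α *
        (‖a p‖) ^ 2)) :
    (∑ k ∈ Finset.Icc 1 N, f k * (‖a k‖) ^ 2 / (k : ℝ) ^ σ *
        ∑' m : {m : ℕ // (N : ℝ) / k < (m : ℝ) ∧ Nat.Coprime m k},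
          (f m) ^ 2 * (‖a m‖) ^ 2)
      ≤ (N : ℝ) ^ (-α) * ∑' k : ℕ, f k * (‖a k‖) ^ 2 * (k : ℝ) ^ (α - σ) *
          ∏' p : {p : ℕ // p.Prime ∧ ¬ p ∣ k},
            (1 + ((p : ℕ) : ℝ) ^ α * (f p) ^ 2 * (‖a p‖) ^ 2) ∧
    (N : ℝ) ^ (-α) * (∑' k : ℕ, f k * (‖a k‖) ^ 2 * (k : ℝ) ^ (α - σ) *
          ∏' p : {p : ℕ // p.Prime ∧ ¬ p ∣ k},
            (1 + ((p : ℕ) : ℝ) ^ α * (f p) ^ 2 * (‖a p‖) ^ 2))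
      ≤ (N : ℝ) ^ (-α) * ∏' p : {p : ℕ // p.Prime},
          (1 + ((f p) ^ 2 + f p / ((p : ℕ) : ℝ) ^ σ) * ((p : ℕ) : ℝ) ^ α *
            (‖a p‖) ^ 2) :=
  rankin_trick_general f a N σ α hα hf_nonneg hf_sqfree hf_mult ha_mult hprod2
end

section
/- Let σ > 1/2, β ∈ (1-σ, σ), L ≥ 2, and define the multiplicative function f by f(p^k) = min(1, (L/p^k)^β). Then for every positive integer n, ∑_{k | n} (1/(k^σ · f(k))) ≤ exp( L^{-β}·∑_{p | n} 1/(p^{σ-β} - 1) + ∑_{p | n} 1/(p^σ - 1) ), where the divisor sum can be restricted to divisors k with f(k) ≠ 0 and interpreted via the Euler-product factorization over primes dividing n. -/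
/-!
Since `f` is multiplicative, so is `k ↦ 1 / (k ^ σ f k)`, and the divisor sum factors as
`∏_{p ^ a ∥ n} (1 + ∑_{1 ≤ j ≤ a} 1 / (p ^ (jσ) f (p ^ j)))`. Splitting `1 / min 1 x ≤ 1 + 1 / x`,
each summand is at most `p ^ (-jσ) + L ^ (-β) p ^ (-j(σ - β))`; both geometric series converge
because `σ > 0` and `σ - β > 0`, and `1 + x ≤ exp x` finishes the bound prime by prime.
-/

/-- The multiplicative function determined by `f (p^k) = min 1 ((L / p^k)^β)` on prime
powers, extended multiplicatively via the prime factorization. -/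
noncomputable def resonatorF (L β : ℝ) (n : ℕ) : ℝ :=
  ∏ p ∈ n.primeFactors, min 1 ((L / (p ^ (n.factorization p) : ℕ)) ^ β)

open Finset Real ArithmeticFunction
open scoped ArithmeticFunction.zeta

theorem Nat.sum_divisors_eq_prod_primeFactors_of_coprime_mul {R : Type*} [CommSemiring R]
    (g : ℕ → R) (hg_one : g 1 = 1)
    (hg_mul : ∀ {m n : ℕ}, m ≠ 0 → n ≠ 0 → m.Coprime n → g (m * n) = g m * g n)
    {n : ℕ} (hn : n ≠ 0) :
    ∑ d ∈ n.divisors, g d = ∏ p ∈ n.primeFactors, ∑ i ∈ range (n.factorization p + 1), g (p ^ i) := by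
  let G : ArithmeticFunction R := ⟨fun k => if k = 0 then 0 else g k, if_pos rfl⟩
  have hG : ∀ {k}, k ≠ 0 → G k = g k := fun hk => if_neg hk
  have hG_mul : G.IsMultiplicative := by
    refine (IsMultiplicative.iff_ne_zero).2 ⟨by rw [hG one_ne_zero, hg_one], fun hm hk hmk => ?_⟩
    rw [hG (mul_ne_zero hm hk), hG hm, hG hk, hg_mul hm hk hmk]
  have hζG : ∀ m, ((ζ : ArithmeticFunction R) * G) m = ∑ d ∈ m.divisors, g d := fun m =>
    coe_zeta_mul_apply.trans (sum_congr rfl fun d hd => hG (Nat.pos_of_mem_divisors hd).ne')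
  rw [← hζG, (isMultiplicative_zeta.natCast.mul hG_mul).multiplicative_factorization _ hn,
    Nat.prod_factorization_eq_prod_primeFactors]
  exact prod_congr rfl fun p hp => by
    rw [hζG, Nat.sum_divisors_prime_pow (Nat.prime_of_mem_primeFactors hp)]

theorem geom_sum_Ico_one_inv_le {q : ℝ} (hq : 1 < q) (n : ℕ) :
    ∑ i ∈ Ico 1 n, q⁻¹ ^ i ≤ 1 / (q - 1) := by
  have hq0 : 0 < q := one_pos.trans hq
  calc ∑ i ∈ Ico 1 n, q⁻¹ ^ i ≤ q⁻¹ ^ 1 / (1 - q⁻¹) :=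
        geom_sum_Ico_le_of_lt_one (inv_nonneg.2 hq0.le) (inv_lt_one_of_one_lt₀ hq)
    _ = 1 / (q - 1) := by field_simp

theorem one_div_mul_min_one_le {A x : ℝ} (hA : 0 < A) (hx : 0 < x) :
    1 / (A * min 1 x) ≤ 1 / A + 1 / (A * x) := by
  rcases min_cases 1 x with ⟨h, -⟩ | ⟨h, -⟩ <;> rw [h]
  · simpa using (by positivity : 0 ≤ 1 / (A * x))
  · simpa using (by positivity : 0 ≤ 1 / A)

section resonatorF

variable {L β : ℝ}

theorem resonatorF_eq_factorization_prod (n : ℕ) :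
    resonatorF L β n = n.factorization.prod fun p k => min 1 ((L / (p ^ k : ℕ)) ^ β) := by
  rw [resonatorF, Finsupp.prod, Nat.support_factorization]

theorem resonatorF_pos (hL : 0 < L) (n : ℕ) : 0 < resonatorF L β n :=
  prod_pos fun p hp =>
    have := (Nat.prime_of_mem_primeFactors hp).pos
    lt_min one_pos (rpow_pos_of_pos (by positivity) β)

theorem resonatorF_one : resonatorF L β 1 = 1 := by simp [resonatorF]

theorem resonatorF_mul_of_coprime {m n : ℕ} (h : m.Coprime n) :
    resonatorF L β (m * n) = resonatorF L β m * resonatorF L β n := by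
  simp only [resonatorF_eq_factorization_prod, Nat.factorization_mul_of_coprime h]
  exact Finsupp.prod_add_index_of_disjoint (by simpa using h.disjoint_primeFactors) _

theorem resonatorF_prime_pow {p : ℕ} (hp : p.Prime) {j : ℕ} (hj : j ≠ 0) :
    resonatorF L β (p ^ j) = min 1 ((L / (p : ℝ) ^ j) ^ β) := by
  simp [resonatorF, Nat.primeFactors_prime_pow hj hp, hp.factorization_pow]

theorem one_div_rpow_mul_resonatorF_prime_pow_le {σ : ℝ} (hL : 0 < L) {p : ℕ} (hp : p.Prime)
    {j : ℕ} (hj : j ≠ 0) :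
    1 / (((p ^ j : ℕ) : ℝ) ^ σ * resonatorF L β (p ^ j))
      ≤ ((p : ℝ) ^ σ)⁻¹ ^ j + L ^ (-β) * ((p : ℝ) ^ (σ - β))⁻¹ ^ j := by
  have hp0 : (0 : ℝ) < p := Nat.cast_pos.2 hp.pos
  have hpow_rpow : ∀ c : ℝ, ((p : ℝ) ^ j) ^ c = ((p : ℝ) ^ c) ^ j := fun c => by
    rw [← rpow_natCast, ← rpow_natCast, ← rpow_mul hp0.le, ← rpow_mul hp0.le, mul_comm]
  rw [resonatorF_prime_pow hp hj, Nat.cast_pow]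
  refine (one_div_mul_min_one_le (by positivity) (by positivity)).trans_eq ?_
  rw [div_rpow hL.le (by positivity), hpow_rpow, hpow_rpow, rpow_sub hp0, rpow_neg hL.le,
    inv_div, div_pow, inv_pow]
  field_simp

theorem sum_range_one_div_rpow_mul_resonatorF_prime_pow_le {σ : ℝ} (hσ : 0 < σ) (hβσ : β < σ)
    (hL : 0 < L) {p : ℕ} (hp : p.Prime) (a : ℕ) :
    ∑ i ∈ range (a + 1), 1 / (((p ^ i : ℕ) : ℝ) ^ σ * resonatorF L β (p ^ i))
      ≤ exp (L ^ (-β) * (1 / ((p : ℝ) ^ (σ - β) - 1)) + 1 / ((p : ℝ) ^ σ - 1)) := by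
  have hp1 : (1 : ℝ) < p := Nat.one_lt_cast.2 hp.one_lt
  have hpσ : 1 < (p : ℝ) ^ σ := one_lt_rpow hp1 hσ
  have hpσβ : 1 < (p : ℝ) ^ (σ - β) := one_lt_rpow hp1 (sub_pos.2 hβσ)
  calc ∑ i ∈ range (a + 1), 1 / (((p ^ i : ℕ) : ℝ) ^ σ * resonatorF L β (p ^ i))
      = 1 + ∑ i ∈ Ico 1 (a + 1), 1 / (((p ^ i : ℕ) : ℝ) ^ σ * resonatorF L β (p ^ i)) := by
        rw [range_eq_Ico, sum_eq_sum_Ico_succ_bot (Nat.succ_pos a)]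
        simp [resonatorF_one]
    _ ≤ 1 + ∑ i ∈ Ico 1 (a + 1),
          (((p : ℝ) ^ σ)⁻¹ ^ i + L ^ (-β) * ((p : ℝ) ^ (σ - β))⁻¹ ^ i) := by
        gcongr with i hi
        exact one_div_rpow_mul_resonatorF_prime_pow_le hL hp
          (Nat.one_le_iff_ne_zero.1 (mem_Ico.1 hi).1)
    _ = 1 + (∑ i ∈ Ico 1 (a + 1), ((p : ℝ) ^ σ)⁻¹ ^ i
          + L ^ (-β) * ∑ i ∈ Ico 1 (a + 1), ((p : ℝ) ^ (σ - β))⁻¹ ^ i) := by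
        rw [sum_add_distrib, mul_sum]
    _ ≤ 1 + (1 / ((p : ℝ) ^ σ - 1) + L ^ (-β) * (1 / ((p : ℝ) ^ (σ - β) - 1))) := by
        gcongr
        · exact geom_sum_Ico_one_inv_le hpσ _
        · exact geom_sum_Ico_one_inv_le hpσβ _
    _ = L ^ (-β) * (1 / ((p : ℝ) ^ (σ - β) - 1)) + 1 / ((p : ℝ) ^ σ - 1) + 1 := by ring
    _ ≤ exp (L ^ (-β) * (1 / ((p : ℝ) ^ (σ - β) - 1)) + 1 / ((p : ℝ) ^ σ - 1)) :=
        add_one_le_exp _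

end resonatorF

theorem divisor_sum_bound_general (σ β L : ℝ) (hσ : 1/2 < σ) (hβ₂ : β < σ)
    (hL : 2 ≤ L) (n : ℕ) (hn : 0 < n) :
    (∑ k ∈ n.divisors.filter (fun k => resonatorF L β k ≠ 0),
        1 / ((k : ℝ) ^ σ * resonatorF L β k))
      ≤ Real.exp (L ^ (-β) * (∑ p ∈ n.primeFactors, 1 / ((p : ℝ) ^ (σ - β) - 1))
          + ∑ p ∈ n.primeFactors, 1 / ((p : ℝ) ^ σ - 1)) := by
  have hL0 : 0 < L := by linarith
  have hf_pos := resonatorF_pos (β := β) hL0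
  rw [filter_true_of_mem fun k _ => (hf_pos k).ne',
    Nat.sum_divisors_eq_prod_primeFactors_of_coprime_mul _ (by simp [resonatorF_one])
      (fun {m k} _ _ hmk => by
        rw [Nat.cast_mul, mul_rpow m.cast_nonneg k.cast_nonneg, resonatorF_mul_of_coprime hmk,
          one_div_mul_one_div, mul_mul_mul_comm]) hn.ne',
    mul_sum, ← sum_add_distrib, exp_sum]
  refine prod_le_prod (fun p _ => sum_nonneg fun i _ => ?_) fun p hp =>
    sum_range_one_div_rpow_mul_resonatorF_prime_pow_le (by linarith) hβ₂ hL0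
      (Nat.prime_of_mem_primeFactors hp) _
  have := hf_pos (p ^ i)
  positivity

theorem divisor_sum_bound (σ β L : ℝ) (hσ : 1/2 < σ) (hβ₁ : 1 - σ < β) (hβ₂ : β < σ)
    (hL : 2 ≤ L) (n : ℕ) (hn : 0 < n) :
    (∑ k ∈ n.divisors.filter (fun k => resonatorF L β k ≠ 0),
        1 / ((k : ℝ) ^ σ * resonatorF L β k))
      ≤ Real.exp (L ^ (-β) * (∑ p ∈ n.primeFactors, 1 / ((p : ℝ) ^ (σ - β) - 1))
          + ∑ p ∈ n.primeFactors, 1 / ((p : ℝ) ^ σ - 1)) :=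
  divisor_sum_bound_general σ β L hσ hβ₂ hL n hn
end
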